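/- arXiv:2408.07016 — 2 statements merged into one kernel-verified Lean document; each statement's English description precedes it below -/
import Mathlib

section
/- Let X be a random variable, Z = (Z₁, Z̃) a representation of X (i.e., Z is conditionally independent of everything else given X, so in particular (Z̃ ↔ X ↔ Y) and (Z₁ ↔ X ↔ Y) hold for any Y determined through X), and Y a factor of variation satisfying the Markov chain X ↔ Z₁ ↔ Y. Then I(Y;Z₁) = I(Y;(Z₁,Z̃)), i.e., the Markov chain Z̃ ↔ Z₁ ↔ Y holds (compactness). -/
open BigOperators Real

variable {Ω : Type*} [Fintype Ω]

/-- `p` is a probability mass function on the finite sample space `Ω`. -/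
def IsPMF {Ω : Type*} [Fintype Ω] (p : Ω → ℝ) : Prop :=
  (∀ ω, 0 ≤ p ω) ∧ ∑ ω, p ω = 1

/-- The probability that the random variable `A` takes the value `a`. -/
noncomputable def prob {Ω : Type*} [Fintype Ω] (p : Ω → ℝ) {α : Type*} [DecidableEq α]
    (A : Ω → α) (a : α) : ℝ :=
  ∑ ω ∈ Finset.univ.filter (fun ω => A ω = a), p ω

/-- The Shannon entropy `H(A)` of the random variable `A`. -/
noncomputable def entropy {Ω : Type*} [Fintype Ω] (p : Ω → ℝ) {α : Type*} [DecidableEq α]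
    (A : Ω → α) : ℝ :=
  -∑ a ∈ Finset.univ.image A, prob p A a * Real.log (prob p A a)

/-- The mutual information `I(A;B)`. -/
noncomputable def mutualInfo {Ω : Type*} [Fintype Ω] (p : Ω → ℝ) {α β : Type*}
    [DecidableEq α] [DecidableEq β] (A : Ω → α) (B : Ω → β) : ℝ :=
  entropy p A + entropy p B - entropy p (fun ω => (A ω, B ω))

/-- The conditional mutual information `I(A;B∣C)`. -/
noncomputable def condMutualInfo {Ω : Type*} [Fintype Ω] (p : Ω → ℝ) {α β γ : Type*}
    [DecidableEq α] [DecidableEq β] [DecidableEq γ]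
    (A : Ω → α) (B : Ω → β) (C : Ω → γ) : ℝ :=
  entropy p (fun ω => (A ω, C ω)) + entropy p (fun ω => (B ω, C ω))
    - entropy p (fun ω => (A ω, B ω, C ω)) - entropy p C

/-- The conditional entropy `H(A∣C)`. -/
noncomputable def condEntropy {Ω : Type*} [Fintype Ω] (p : Ω → ℝ) {α γ : Type*}
    [DecidableEq α] [DecidableEq γ] (A : Ω → α) (C : Ω → γ) : ℝ :=
  entropy p (fun ω => (A ω, C ω)) - entropy p C


-- auxiliary lemmas

lemma sum_prob_mul {α : Type*} [DecidableEq α] (p : Ω → ℝ) (A : Ω → α) (φ : α → ℝ) :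
    ∑ a ∈ Finset.univ.image A, prob p A a * φ a = ∑ ω, p ω * φ (A ω) := by
  unfold prob
  rw [← Finset.sum_fiberwise_of_maps_to (g := A)
    (fun ω _ => Finset.mem_image_of_mem A (Finset.mem_univ ω)) (fun ω => p ω * φ (A ω))]
  refine Finset.sum_congr rfl fun a _ => ?_
  rw [Finset.sum_mul]
  refine Finset.sum_congr rfl fun ω hω => ?_
  rw [(Finset.mem_filter.mp hω).2]

lemma entropy_eq {α : Type*} [DecidableEq α] (p : Ω → ℝ) (A : Ω → α) :
    entropy p A = -∑ ω, p ω * Real.log (prob p A (A ω)) := by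
  unfold entropy
  rw [sum_prob_mul p A (fun a => Real.log (prob p A a))]

lemma prob_nonneg {α : Type*} [DecidableEq α] {p : Ω → ℝ} (hp : ∀ ω, 0 ≤ p ω)
    (A : Ω → α) (a : α) : 0 ≤ prob p A a :=
  Finset.sum_nonneg fun ω _ => hp ω

lemma prob_le {α β : Type*} [DecidableEq α] [DecidableEq β] {p : Ω → ℝ} (hp : ∀ ω, 0 ≤ p ω)
    {A : Ω → α} {B : Ω → β} {a : α} {b : β} (h : ∀ ω, A ω = a → B ω = b) :
    prob p A a ≤ prob p B b := by
  refine Finset.sum_le_sum_of_subset_of_nonneg ?_ (fun ω _ _ => hp ω)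
  intro ω hω
  simp only [Finset.mem_filter, Finset.mem_univ, true_and] at *
  exact h ω hω

lemma le_prob {α : Type*} [DecidableEq α] {p : Ω → ℝ} (hp : ∀ ω, 0 ≤ p ω)
    (A : Ω → α) (ω : Ω) : p ω ≤ prob p A (A ω) :=
  Finset.single_le_sum (fun ω' _ => hp ω') (by simp)

lemma marginal_fst {α β : Type*} [DecidableEq α] [DecidableEq β] (p : Ω → ℝ)
    (A : Ω → α) (B : Ω → β) (b : β) :
    ∑ a ∈ Finset.univ.image A, prob p (fun ω => (A ω, B ω)) (a, b) = prob p B b := by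
  unfold prob
  have h := Finset.sum_fiberwise_of_maps_to (s := Finset.univ.filter (fun ω => B ω = b))
    (t := Finset.univ.image A) (g := A)
    (fun ω _ => Finset.mem_image_of_mem A (Finset.mem_univ ω)) p
  rw [← h]
  refine Finset.sum_congr rfl fun a _ => ?_
  rw [Finset.filter_filter]
  congr 1
  ext ω
  simp [Prod.ext_iff, and_comm]

lemma total_prob {α : Type*} [DecidableEq α] {p : Ω → ℝ} (hp : IsPMF p) (A : Ω → α) :
    ∑ a ∈ Finset.univ.image A, prob p A a = 1 := by
  have := sum_prob_mul p A (fun _ => (1:ℝ))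
  simpa [hp.2] using this

lemma prob_comp {α α' : Type*} [DecidableEq α] [DecidableEq α'] (p : Ω → ℝ)
    {g : α → α'} (hg : Function.Injective g) (A : Ω → α) (a : α) :
    prob p (fun ω => g (A ω)) (g a) = prob p A a := by
  unfold prob
  congr 1
  ext ω
  simp [hg.eq_iff]

lemma entropy_comp {α α' : Type*} [DecidableEq α] [DecidableEq α'] (p : Ω → ℝ)
    {g : α → α'} (hg : Function.Injective g) (A : Ω → α) :
    entropy p (fun ω => g (A ω)) = entropy p A := by
  unfold entropy
  rw [show Finset.univ.image (fun ω => g (A ω)) = (Finset.univ.image A).image g from by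
    ext x; simp]
  rw [Finset.sum_image (fun x _ y _ h => hg h)]
  exact congrArg Neg.neg (Finset.sum_congr rfl fun a _ => by rw [prob_comp p hg])

lemma cmi_nonneg {α β γ : Type*} [DecidableEq α] [DecidableEq β] [DecidableEq γ]
    (p : Ω → ℝ) (hp : IsPMF p) (A : Ω → α) (B : Ω → β) (C : Ω → γ) :
    0 ≤ condMutualInfo p A B C := by
  obtain ⟨hp0, hp1⟩ := hp
  set f : α × β × γ → ℝ := prob p (fun ω => (A ω, B ω, C ω)) with hf
  set u : α × γ → ℝ := prob p (fun ω => (A ω, C ω)) with hu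
  set v : β × γ → ℝ := prob p (fun ω => (B ω, C ω)) with hv
  set g : γ → ℝ := prob p C with hg
  have hexp : condMutualInfo p A B C =
      ∑ ω, p ω * (Real.log (f (A ω, B ω, C ω)) + Real.log (g (C ω))
        - Real.log (u (A ω, C ω)) - Real.log (v (B ω, C ω))) := by
    simp only [condMutualInfo, entropy_eq, mul_add, mul_sub, Finset.sum_add_distrib,
      Finset.sum_sub_distrib]
    ring
  -- the "ratio" function
  set φ : α × β × γ → ℝ := fun t => u (t.1, t.2.2) * v (t.2.1, t.2.2) / (f t * g t.2.2) with hφ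
  have step1 : ∑ ω, p ω * (1 - φ (A ω, B ω, C ω)) ≤ condMutualInfo p A B C := by
    rw [hexp]
    refine Finset.sum_le_sum fun ω _ => ?_
    rcases (hp0 ω).eq_or_lt with h0 | h0
    · rw [← h0]; simp
    refine mul_le_mul_of_nonneg_left ?_ (hp0 ω)
    have hfpos : 0 < f (A ω, B ω, C ω) := lt_of_lt_of_le h0 (le_prob hp0 _ ω)
    have hupos : 0 < u (A ω, C ω) := lt_of_lt_of_le hfpos
      (prob_le hp0 (fun ω' h => by simp only [Prod.mk.injEq] at h; simp [h]))
    have hvpos : 0 < v (B ω, C ω) := lt_of_lt_of_le hfpos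
      (prob_le hp0 (fun ω' h => by simp only [Prod.mk.injEq] at h; simp [h]))
    have hgpos : 0 < g (C ω) := lt_of_lt_of_le hfpos
      (prob_le hp0 (fun ω' h => by simp only [Prod.mk.injEq] at h; simp [h]))
    have hx : 0 < φ (A ω, B ω, C ω) := by
      simp only [hφ]
      positivity
    have hlog := Real.log_le_sub_one_of_pos hx
    have hlogeq : Real.log (φ (A ω, B ω, C ω)) =
        Real.log (u (A ω, C ω)) + Real.log (v (B ω, C ω))
          - Real.log (f (A ω, B ω, C ω)) - Real.log (g (C ω)) := by
      simp only [hφ]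
      rw [Real.log_div (by positivity) (by positivity),
        Real.log_mul hupos.ne' hvpos.ne', Real.log_mul hfpos.ne' hgpos.ne']
      ring
    rw [hlogeq] at hlog
    linarith
  have step2 : ∑ ω, p ω * φ (A ω, B ω, C ω) ≤ 1 := by
    rw [← sum_prob_mul p (fun ω => (A ω, B ω, C ω)) φ]
    calc ∑ t ∈ Finset.univ.image (fun ω => (A ω, B ω, C ω)), f t * φ t
        ≤ ∑ t ∈ Finset.univ.image (fun ω => (A ω, B ω, C ω)),
            u (t.1, t.2.2) * v (t.2.1, t.2.2) / g t.2.2 := by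
          refine Finset.sum_le_sum fun t _ => ?_
          rcases (show (0:ℝ) ≤ f t from prob_nonneg hp0 _ t).eq_or_lt with h0 | h0
          · rw [← h0, zero_mul]
            have h1 : 0 ≤ u (t.1, t.2.2) := prob_nonneg hp0 _ _
            have h2 : 0 ≤ v (t.2.1, t.2.2) := prob_nonneg hp0 _ _
            have h3 : 0 ≤ g t.2.2 := prob_nonneg hp0 _ _
            positivity
          · apply le_of_eq
            simp only [hφ]
            rw [← mul_div_assoc, mul_div_mul_left _ _ h0.ne']
      _ ≤ ∑ t ∈ (Finset.univ.image A) ×ˢ ((Finset.univ.image B) ×ˢ (Finset.univ.image C)),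
            u (t.1, t.2.2) * v (t.2.1, t.2.2) / g t.2.2 := by
          refine Finset.sum_le_sum_of_subset_of_nonneg ?_ fun t _ _ => ?_
          · intro t ht
            simp only [Finset.mem_image, Finset.mem_univ, true_and] at ht
            obtain ⟨ω, rfl⟩ := ht
            simp [Finset.mem_product]
          · have h1 : 0 ≤ u (t.1, t.2.2) := prob_nonneg hp0 _ _
            have h2 : 0 ≤ v (t.2.1, t.2.2) := prob_nonneg hp0 _ _
            have h3 : 0 ≤ g t.2.2 := prob_nonneg hp0 _ _
            positivity
      _ = 1 := by
          rw [Finset.sum_product]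
          rw [Finset.sum_comm]
          have hstep : ∀ bc ∈ (Finset.univ.image B) ×ˢ (Finset.univ.image C),
              ∑ a ∈ Finset.univ.image A, u (a, bc.2) * v (bc.1, bc.2) / g bc.2
                = v (bc.1, bc.2) := by
            intro bc _
            have : ∑ a ∈ Finset.univ.image A, u (a, bc.2) * v (bc.1, bc.2) / g bc.2
                = (∑ a ∈ Finset.univ.image A, u (a, bc.2)) * (v (bc.1, bc.2) / g bc.2) := by
              rw [Finset.sum_mul]
              exact Finset.sum_congr rfl fun a _ => by rw [mul_div_assoc]
            rw [this, hu, marginal_fst p A C bc.2]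
            rcases (show (0:ℝ) ≤ g bc.2 from prob_nonneg hp0 C bc.2).eq_or_lt with h0 | h0
            · have hvle : v (bc.1, bc.2) ≤ g bc.2 :=
                prob_le hp0 (fun ω' h => by simp only [Prod.mk.injEq] at h; exact h.2)
              have hvz : v (bc.1, bc.2) = 0 :=
                le_antisymm (hvle.trans_eq h0.symm) (prob_nonneg hp0 _ _)
              rw [hvz]; simp
            · rw [mul_div_cancel₀ _ h0.ne']
          rw [Finset.sum_congr rfl hstep, Finset.sum_product_right]
          have : ∀ c ∈ Finset.univ.image C,
              ∑ b ∈ Finset.univ.image B, v (b, c) = g c := fun c _ => marginal_fst p B C c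
          rw [Finset.sum_congr rfl this, total_prob ⟨hp0, hp1⟩]
  have step3 : ∑ ω, p ω * (1 - φ (A ω, B ω, C ω)) =
      1 - ∑ ω, p ω * φ (A ω, B ω, C ω) := by
    simp only [mul_sub, mul_one, Finset.sum_sub_distrib, hp1]
  linarith

section relabel
variable {α β γ δ : Type*} [DecidableEq α] [DecidableEq β] [DecidableEq γ] [DecidableEq δ]
  (p : Ω → ℝ)

lemma cmi_comm (A : Ω → α) (B : Ω → β) (C : Ω → γ) :
    condMutualInfo p A B C = condMutualInfo p B A C := by
  unfold condMutualInfo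
  have h : entropy p (fun ω => (A ω, B ω, C ω)) = entropy p (fun ω => (B ω, A ω, C ω)) := by
    simpa using entropy_comp p (g := fun t : β × α × γ => (t.2.1, t.1, t.2.2))
      (fun x y h => by simp_all [Prod.ext_iff]) (fun ω => (B ω, A ω, C ω))
  rw [h]; ring

lemma cmi_relabel_B {β' : Type*} [DecidableEq β'] {g : β → β'} (hg : Function.Injective g)
    (A : Ω → α) (B : Ω → β) (C : Ω → γ) :
    condMutualInfo p A (fun ω => g (B ω)) C = condMutualInfo p A B C := by
  unfold condMutualInfo
  have h1 : entropy p (fun ω => (g (B ω), C ω)) = entropy p (fun ω => (B ω, C ω)) := by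
    simpa using entropy_comp p (g := fun t : β × γ => (g t.1, t.2))
      (fun x y h => by simp_all [Prod.ext_iff, hg.eq_iff]) (fun ω => (B ω, C ω))
  have h2 : entropy p (fun ω => (A ω, g (B ω), C ω)) =
      entropy p (fun ω => (A ω, B ω, C ω)) := by
    simpa using entropy_comp p (g := fun t : α × β × γ => (t.1, g t.2.1, t.2.2))
      (fun x y h => by simp_all [Prod.ext_iff, hg.eq_iff]) (fun ω => (A ω, B ω, C ω))
  rw [h1, h2]

lemma cmi_relabel_C {γ' : Type*} [DecidableEq γ'] {g : γ → γ'} (hg : Function.Injective g)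
    (A : Ω → α) (B : Ω → β) (C : Ω → γ) :
    condMutualInfo p A B (fun ω => g (C ω)) = condMutualInfo p A B C := by
  unfold condMutualInfo
  have h1 : entropy p (fun ω => (A ω, g (C ω))) = entropy p (fun ω => (A ω, C ω)) := by
    simpa using entropy_comp p (g := fun t : α × γ => (t.1, g t.2))
      (fun x y h => by simp_all [Prod.ext_iff, hg.eq_iff]) (fun ω => (A ω, C ω))
  have h2 : entropy p (fun ω => (B ω, g (C ω))) = entropy p (fun ω => (B ω, C ω)) := by
    simpa using entropy_comp p (g := fun t : β × γ => (t.1, g t.2))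
      (fun x y h => by simp_all [Prod.ext_iff, hg.eq_iff]) (fun ω => (B ω, C ω))
  have h3 : entropy p (fun ω => (A ω, B ω, g (C ω))) =
      entropy p (fun ω => (A ω, B ω, C ω)) := by
    simpa using entropy_comp p (g := fun t : α × β × γ => (t.1, t.2.1, g t.2.2))
      (fun x y h => by simp_all [Prod.ext_iff, hg.eq_iff]) (fun ω => (A ω, B ω, C ω))
  have h4 : entropy p (fun ω => g (C ω)) = entropy p C := entropy_comp p hg C
  rw [h1, h2, h3, h4]

lemma cmi_chain (A : Ω → α) (B : Ω → β) (C : Ω → γ) (D : Ω → δ) :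
    condMutualInfo p A (fun ω => (B ω, C ω)) D =
      condMutualInfo p A B D + condMutualInfo p A C (fun ω => (B ω, D ω)) := by
  unfold condMutualInfo
  have h1 : entropy p (fun ω => ((B ω, C ω), D ω)) =
      entropy p (fun ω => (C ω, B ω, D ω)) := by
    simpa using (entropy_comp p (g := fun t : γ × β × δ => ((t.2.1, t.1), t.2.2))
      (fun x y h => by simp_all [Prod.ext_iff]) (fun ω => (C ω, B ω, D ω)))
  have h2 : entropy p (fun ω => (A ω, (B ω, C ω), D ω)) =
      entropy p (fun ω => (A ω, C ω, B ω, D ω)) := by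
    simpa using (entropy_comp p (g := fun t : α × γ × β × δ => (t.1, (t.2.2.1, t.2.1), t.2.2.2))
      (fun x y h => by simp_all [Prod.ext_iff]) (fun ω => (A ω, C ω, B ω, D ω)))
  rw [h1, h2]; ring

lemma mi_chain (A : Ω → α) (B : Ω → β) (C : Ω → γ) :
    mutualInfo p A (fun ω => (B ω, C ω)) =
      mutualInfo p A B + condMutualInfo p A C B := by
  unfold mutualInfo condMutualInfo
  have h1 : entropy p (fun ω => (B ω, C ω)) = entropy p (fun ω => (C ω, B ω)) := by
    simpa using (entropy_comp p (g := fun t : γ × β => (t.2, t.1))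
      (fun x y h => by simp_all [Prod.ext_iff]) (fun ω => (C ω, B ω)))
  have h2 : entropy p (fun ω => (A ω, B ω, C ω)) =
      entropy p (fun ω => (A ω, C ω, B ω)) := by
    simpa using (entropy_comp p (g := fun t : α × γ × β => (t.1, t.2.2, t.2.1))
      (fun x y h => by simp_all [Prod.ext_iff]) (fun ω => (A ω, C ω, B ω)))
  rw [h1, h2]; ring

end relabel


/-- If `Z = (Z₁,Z̃)` is a representation of `X` (`Y ↔ X ↔ (Z₁,Z̃)`) and `Z₁` is
sufficient for `Y` (`X ↔ Z₁ ↔ Y`), then `I(Y;Z₁) = I(Y;(Z₁,Z̃))`, i.e. the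
Markov chain `Z̃ ↔ Z₁ ↔ Y` (compactness) holds. -/
theorem stmt_3 {Ω α β γ δ : Type*} [Fintype Ω]
    [DecidableEq α] [DecidableEq β] [DecidableEq γ] [DecidableEq δ]
    (p : Ω → ℝ) (hp : IsPMF p) (X : Ω → α) (Y : Ω → β) (Z₁ : Ω → γ) (Zt : Ω → δ)
    (hRep : condMutualInfo p Y (fun ω => (Z₁ ω, Zt ω)) X = 0)
    (hSuff : condMutualInfo p X Y Z₁ = 0) :
    mutualInfo p Y Z₁ = mutualInfo p Y (fun ω => (Z₁ ω, Zt ω)) ∧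
      condMutualInfo p Y Zt Z₁ = 0 := by
    -- split hRep
  have chain1 := cmi_chain p Y Z₁ Zt X
  have n1 : 0 ≤ condMutualInfo p Y Z₁ X := cmi_nonneg p hp Y Z₁ X
  have n2 : 0 ≤ condMutualInfo p Y Zt (fun ω => (Z₁ ω, X ω)) :=
    cmi_nonneg p hp Y Zt _
  have c1 : condMutualInfo p Y Zt (fun ω => (Z₁ ω, X ω)) = 0 := by
    rw [hRep] at chain1; linarith
  -- I(Y;X|Z₁) = 0
  have hYX : condMutualInfo p Y X Z₁ = 0 := by rw [cmi_comm]; exact hSuff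
  -- chain2 : I(Y;(X,Zt)|Z₁) = I(Y;X|Z₁) + I(Y;Zt|(X,Z₁)) = 0
  have chain2 := cmi_chain p Y X Zt Z₁
  have hXZ : condMutualInfo p Y Zt (fun ω => (X ω, Z₁ ω)) = 0 := by
    have h := cmi_relabel_C p (g := fun t : γ × α => (t.2, t.1))
      (fun x y h => by simp_all [Prod.ext_iff]) Y Zt (fun ω => (Z₁ ω, X ω))
    simp only at h
    rw [c1] at h
    simpa using h
  have hchain2 : condMutualInfo p Y (fun ω => (X ω, Zt ω)) Z₁ = 0 := by
    rw [chain2, hYX, hXZ]; ring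
  -- chain3 : I(Y;(Zt,X)|Z₁) = I(Y;Zt|Z₁) + I(Y;X|(Zt,Z₁))
  have chain3 := cmi_chain p Y Zt X Z₁
  have hswap : condMutualInfo p Y (fun ω => (Zt ω, X ω)) Z₁ = 0 := by
    have h := cmi_relabel_B p (g := fun t : α × δ => (t.2, t.1))
      (fun x y h => by simp_all [Prod.ext_iff]) Y (fun ω => (X ω, Zt ω)) Z₁
    simp only at h
    rw [hchain2] at h
    simpa using h
  have n3 : 0 ≤ condMutualInfo p Y X (fun ω => (Zt ω, Z₁ ω)) := cmi_nonneg p hp Y X _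
  have n4 : 0 ≤ condMutualInfo p Y Zt Z₁ := cmi_nonneg p hp Y Zt Z₁
  have goal2 : condMutualInfo p Y Zt Z₁ = 0 := by
    rw [hswap] at chain3; linarith
  refine ⟨?_, goal2⟩
  rw [mi_chain p Y Z₁ Zt, goal2, add_zero]
end

section
/- Under the Markov chains Y ↔ X ↔ (Z₁,Z̃) and X ↔ Z₁ ↔ Y, one has p(y|x) = p(y|z₁) whenever the conditioning events have positive probability; that is, the conditional distribution of Y given X coincides with that given Z₁ along the joint distribution. -/
open BigOperators Real

variable {Ω : Type*} [Fintype Ω]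

section AuxHelpers

variable {α β : Type*} [DecidableEq α] [DecidableEq β]

lemma aux_prob_nonneg {p : Ω → ℝ} (hp : ∀ ω, 0 ≤ p ω) (A : Ω → α) (a : α) :
    0 ≤ prob p A a :=
  Finset.sum_nonneg fun ω _ => hp ω

lemma aux_prob_le_prob {p : Ω → ℝ} (hp : ∀ ω, 0 ≤ p ω) {A : Ω → α} {B : Ω → β} {a : α} {b : β}
    (h : ∀ ω, A ω = a → B ω = b) : prob p A a ≤ prob p B b := by
  apply Finset.sum_le_sum_of_subset_of_nonneg
  · intro ω hω
    simp only [Finset.mem_filter, Finset.mem_univ, true_and] at *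
    exact h ω hω
  · exact fun ω _ _ => hp ω

lemma aux_le_prob {p : Ω → ℝ} (hp : ∀ ω, 0 ≤ p ω) (A : Ω → α) (ω : Ω) :
    p ω ≤ prob p A (A ω) := by
  apply Finset.single_le_sum (f := p) (fun i _ => hp i)
  simp

lemma aux_prob_eq_zero {p : Ω → ℝ} {A : Ω → α} {a : α} (h : ∀ ω, A ω ≠ a) :
    prob p A a = 0 := by
  unfold prob
  rw [Finset.filter_false_of_mem (fun ω _ => h ω)]
  simp

lemma aux_exists_of_prob_ne_zero {p : Ω → ℝ} {A : Ω → α} {a : α}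
    (h : prob p A a ≠ 0) : ∃ ω, p ω ≠ 0 ∧ A ω = a := by
  by_contra hc
  push_neg at hc
  apply h
  unfold prob
  apply Finset.sum_eq_zero
  intro ω hω
  simp only [Finset.mem_filter, Finset.mem_univ, true_and] at hω
  rcases eq_or_ne (p ω) 0 with h0 | h0
  · exact h0
  · exact absurd hω (hc ω h0)

lemma aux_entropy_eq_sum (p : Ω → ℝ) (A : Ω → α) :
    entropy p A = -∑ ω, p ω * Real.log (prob p A (A ω)) := by
  unfold entropy
  congr 1
  rw [← Finset.sum_fiberwise_of_maps_to (g := A)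
      (fun ω _ => Finset.mem_image_of_mem A (Finset.mem_univ ω))
      (fun ω => p ω * Real.log (prob p A (A ω)))]
  refine Finset.sum_congr rfl fun a _ => ?_
  rw [Finset.sum_congr rfl (fun ω hω => by
    rw [(Finset.mem_filter.mp hω).2] :
    ∀ ω ∈ Finset.univ.filter (fun ω => A ω = a),
      p ω * Real.log (prob p A (A ω)) = p ω * Real.log (prob p A a)),
    ← Finset.sum_mul]
  rfl

lemma aux_sum_filter_fiber {κ : Type*} [DecidableEq κ] (p : Ω → ℝ)
    (Q : Ω → Prop) [DecidablePred Q] (K : Ω → κ) :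
    ∑ k ∈ Finset.univ.image K,
        ∑ ω ∈ Finset.univ.filter (fun ω => Q ω ∧ K ω = k), p ω
      = ∑ ω ∈ Finset.univ.filter Q, p ω := by
  rw [← Finset.sum_fiberwise_of_maps_to (s := Finset.univ.filter Q) (g := K)
      (fun ω _ => Finset.mem_image_of_mem K (Finset.mem_univ ω)) p]
  exact Finset.sum_congr rfl fun k _ => by rw [Finset.filter_filter]

lemma aux_prob_fiber_sum {κ σ τ : Type*} [DecidableEq κ] [DecidableEq σ] [DecidableEq τ]
    (p : Ω → ℝ) (K : Ω → κ) (BIG : Ω → σ) (SMALL : Ω → τ) (bv : κ → σ) (sv : τ)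
    (hiff : ∀ ω k, BIG ω = bv k ↔ SMALL ω = sv ∧ K ω = k) :
    ∑ k ∈ Finset.univ.image K, prob p BIG (bv k) = prob p SMALL sv := by
  have h1 : ∀ k, prob p BIG (bv k)
      = ∑ ω ∈ Finset.univ.filter (fun ω => SMALL ω = sv ∧ K ω = k), p ω := by
    intro k; unfold prob
    exact Finset.sum_congr (Finset.filter_congr (fun ω _ => hiff ω k)) (fun _ _ => rfl)
  rw [Finset.sum_congr rfl (fun k _ => h1 k)]
  exact aux_sum_filter_fiber p _ K

end AuxHelpers

lemma gibbs_aux {a b : ℝ} (ha : 0 ≤ a) (hb : 0 ≤ b) (hab : a ≠ 0 → b ≠ 0) :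
    a - b ≤ a * Real.log (a / b) ∧ (a * Real.log (a / b) = a - b → a = b) := by
  rcases eq_or_lt_of_le ha with h0 | hpos
  · constructor
    · rw [← h0]; simpa using hb
    · intro h; rw [← h0] at h ⊢; linarith [h.symm]
  · have hb' : 0 < b := lt_of_le_of_ne hb (Ne.symm (hab (ne_of_gt hpos)))
    have hba : 0 < b / a := div_pos hb' hpos
    have hlog : Real.log (a / b) = -Real.log (b / a) := by
      rw [← Real.log_inv, inv_div]
    have h2 : a * (b / a - 1) = b - a := by field_simp
    constructor
    · have h1 : Real.log (b / a) ≤ b / a - 1 := Real.log_le_sub_one_of_pos hba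
      have h3 := mul_le_mul_of_nonneg_left h1 (le_of_lt hpos)
      rw [hlog]; nlinarith
    · intro heq
      by_contra hne
      have hne' : b / a ≠ 1 := by
        intro h
        rw [div_eq_one_iff_eq (ne_of_gt hpos)] at h
        exact hne h.symm
      have h1 : Real.log (b / a) < b / a - 1 := Real.log_lt_sub_one_of_pos hba hne'
      have h3 := mul_lt_mul_of_pos_left h1 hpos
      rw [hlog] at heq
      nlinarith

lemma gibbs_eq {ι : Type*} (s : Finset ι) (f g : ι → ℝ)
    (hf : ∀ i ∈ s, 0 ≤ f i) (hg : ∀ i ∈ s, 0 ≤ g i)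
    (hfg : ∀ i ∈ s, f i ≠ 0 → g i ≠ 0)
    (hsum : ∑ i ∈ s, f i = ∑ i ∈ s, g i)
    (h0 : ∑ i ∈ s, f i * Real.log (f i / g i) = 0) :
    ∀ i ∈ s, f i = g i := by
  have key : ∀ i ∈ s, 0 ≤ f i * Real.log (f i / g i) - (f i - g i) := fun i hi =>
    sub_nonneg.mpr ((gibbs_aux (hf i hi) (hg i hi) (hfg i hi)).1)
  have hzero : ∑ i ∈ s, (f i * Real.log (f i / g i) - (f i - g i)) = 0 := by
    rw [Finset.sum_sub_distrib, Finset.sum_sub_distrib, h0, hsum]; ring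
  have hall := (Finset.sum_eq_zero_iff_of_nonneg key).mp hzero
  intro i hi
  exact (gibbs_aux (hf i hi) (hg i hi) (hfg i hi)).2 (by have := hall i hi; linarith)

lemma ci_of_cmi_zero {Ω α β γ : Type*} [Fintype Ω]
    [DecidableEq α] [DecidableEq β] [DecidableEq γ]
    (p : Ω → ℝ) (hp : IsPMF p) (A : Ω → α) (B : Ω → β) (C : Ω → γ)
    (h : condMutualInfo p A B C = 0) (a : α) (b : β) (c : γ) :
    prob p (fun ω => (A ω, B ω, C ω)) (a, b, c) * prob p C c
      = prob p (fun ω => (A ω, C ω)) (a, c) * prob p (fun ω => (B ω, C ω)) (b, c) := by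
  obtain ⟨hp1, hp2⟩ := hp
  classical
  set T : Finset (α × β × γ) :=
    (Finset.univ.image A) ×ˢ ((Finset.univ.image B) ×ˢ (Finset.univ.image C)) with hT
  set g : α × β × γ → ℝ := fun t =>
    prob p (fun ω => (A ω, C ω)) (t.1, t.2.2) * prob p (fun ω => (B ω, C ω)) (t.2.1, t.2.2)
      / prob p C t.2.2 with hg
  have hTmem : ∀ ω : Ω, (A ω, B ω, C ω) ∈ T := by
    intro ω
    simp only [hT, Finset.mem_product]
    exact ⟨Finset.mem_image_of_mem A (Finset.mem_univ ω),
           Finset.mem_image_of_mem B (Finset.mem_univ ω),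
           Finset.mem_image_of_mem C (Finset.mem_univ ω)⟩
  -- marginalization facts
  have hmargA : ∀ c' : γ, ∑ x ∈ Finset.univ.image A,
      prob p (fun ω => (A ω, C ω)) (x, c') = prob p C c' := by
    intro c'
    exact aux_prob_fiber_sum p A (fun ω => (A ω, C ω)) C (fun x => (x, c')) c'
      (fun ω k => by simp only [Prod.mk.injEq]; tauto)
  have hmargB : ∀ c' : γ, ∑ x ∈ Finset.univ.image B,
      prob p (fun ω => (B ω, C ω)) (x, c') = prob p C c' := by
    intro c'
    exact aux_prob_fiber_sum p B (fun ω => (B ω, C ω)) C (fun x => (x, c')) c'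
      (fun ω k => by simp only [Prod.mk.injEq]; tauto)
  have hsumC : ∑ c' ∈ Finset.univ.image C, prob p C c' = 1 := by
    have := aux_prob_fiber_sum p C C (fun _ : Ω => ()) (fun c' => c') ()
      (fun ω k => by simp)
    rw [this]
    unfold prob
    simpa using hp2
  -- sum of f over T is 1
  have hsumf : ∑ t ∈ T, prob p (fun ω => (A ω, B ω, C ω)) t = 1 := by
    rw [← hp2]
    exact Finset.sum_fiberwise_of_maps_to (g := fun ω => (A ω, B ω, C ω))
      (fun ω _ => hTmem ω) p
  -- sum of g over T is 1
  have hsumg : ∑ t ∈ T, g t = 1 := by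
    rw [hT, Finset.sum_product]
    simp only [Finset.sum_product]
    rw [Finset.sum_congr rfl (fun x _ => Finset.sum_comm), Finset.sum_comm]
    have hinner : ∀ c' ∈ Finset.univ.image C,
        (∑ x ∈ Finset.univ.image A, ∑ y ∈ Finset.univ.image B, g (x, y, c'))
          = prob p C c' := by
      intro c' _
      have hgval : ∀ (x : α) (y : β), g (x, y, c')
          = prob p (fun ω => (A ω, C ω)) (x, c') * prob p (fun ω => (B ω, C ω)) (y, c')
            / prob p C c' := fun x y => rfl
      calc (∑ x ∈ Finset.univ.image A, ∑ y ∈ Finset.univ.image B, g (x, y, c'))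
          = (∑ x ∈ Finset.univ.image A, ∑ y ∈ Finset.univ.image B,
              prob p (fun ω => (A ω, C ω)) (x, c') * prob p (fun ω => (B ω, C ω)) (y, c'))
              / prob p C c' := by
            rw [Finset.sum_div]
            exact Finset.sum_congr rfl fun x _ => by rw [Finset.sum_div]
        _ = ((∑ x ∈ Finset.univ.image A, prob p (fun ω => (A ω, C ω)) (x, c'))
              * (∑ y ∈ Finset.univ.image B, prob p (fun ω => (B ω, C ω)) (y, c')))
              / prob p C c' := by rw [Finset.sum_mul_sum]
        _ = prob p C c' * prob p C c' / prob p C c' := by rw [hmargA c', hmargB c']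
        _ = prob p C c' := by
            rcases eq_or_ne (prob p C c') 0 with h0 | h0
            · simp [h0]
            · field_simp
    rw [Finset.sum_congr rfl hinner, hsumC]
  -- nonnegativity and absolute continuity
  have hf0 : ∀ t ∈ T, 0 ≤ prob p (fun ω => (A ω, B ω, C ω)) t :=
    fun t _ => aux_prob_nonneg hp1 _ t
  have hg0 : ∀ t ∈ T, 0 ≤ g t := by
    intro t _
    rw [hg]
    have h1 := aux_prob_nonneg hp1 (fun ω => (A ω, C ω)) (t.1, t.2.2)
    have h2 := aux_prob_nonneg hp1 (fun ω => (B ω, C ω)) (t.2.1, t.2.2)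
    have h3 := aux_prob_nonneg hp1 C t.2.2
    positivity
  have hfg : ∀ t ∈ T, prob p (fun ω => (A ω, B ω, C ω)) t ≠ 0 → g t ≠ 0 := by
    intro t _ hne
    obtain ⟨ω, hω0, hωt⟩ := aux_exists_of_prob_ne_zero hne
    subst hωt
    have hpω : 0 < p ω := lt_of_le_of_ne (hp1 ω) (Ne.symm hω0)
    have h1 : 0 < prob p (fun ω => (A ω, C ω)) (A ω, C ω) :=
      lt_of_lt_of_le hpω (aux_le_prob hp1 (fun ω => (A ω, C ω)) ω)
    have h2 : 0 < prob p (fun ω => (B ω, C ω)) (B ω, C ω) :=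
      lt_of_lt_of_le hpω (aux_le_prob hp1 (fun ω => (B ω, C ω)) ω)
    have h3 : 0 < prob p C (C ω) := lt_of_lt_of_le hpω (aux_le_prob hp1 C ω)
    have : g (A ω, B ω, C ω)
        = prob p (fun ω => (A ω, C ω)) (A ω, C ω) * prob p (fun ω => (B ω, C ω)) (B ω, C ω)
          / prob p C (C ω) := rfl
    rw [this]
    exact ne_of_gt (div_pos (mul_pos h1 h2) h3)
  -- the sum equals the conditional mutual information
  have hfiber : ∀ t ∈ T,
      prob p (fun ω => (A ω, B ω, C ω)) t
          * Real.log (prob p (fun ω => (A ω, B ω, C ω)) t / g t)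
        = ∑ ω ∈ Finset.univ.filter (fun ω => (A ω, B ω, C ω) = t),
            p ω * Real.log (prob p (fun ω => (A ω, B ω, C ω)) (A ω, B ω, C ω)
              / g (A ω, B ω, C ω)) := by
    intro t _
    rw [Finset.sum_congr rfl (fun ω hω => by
      rw [(Finset.mem_filter.mp hω).2] :
      ∀ ω ∈ Finset.univ.filter (fun ω => (A ω, B ω, C ω) = t),
        p ω * Real.log (prob p (fun ω => (A ω, B ω, C ω)) (A ω, B ω, C ω)
            / g (A ω, B ω, C ω))
          = p ω * Real.log (prob p (fun ω => (A ω, B ω, C ω)) t / g t)),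
      ← Finset.sum_mul]
    rfl
  have hsplit : ∀ ω : Ω,
      p ω * Real.log (prob p (fun ω => (A ω, B ω, C ω)) (A ω, B ω, C ω) / g (A ω, B ω, C ω))
        = p ω * Real.log (prob p (fun ω => (A ω, B ω, C ω)) (A ω, B ω, C ω))
          + p ω * Real.log (prob p C (C ω))
          - p ω * Real.log (prob p (fun ω => (A ω, C ω)) (A ω, C ω))
          - p ω * Real.log (prob p (fun ω => (B ω, C ω)) (B ω, C ω)) := by
    intro ω
    rcases eq_or_ne (p ω) 0 with h0 | h0
    · simp [h0]
    · have hpω : 0 < p ω := lt_of_le_of_ne (hp1 ω) (Ne.symm h0)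
      have h1 : prob p (fun ω => (A ω, C ω)) (A ω, C ω) ≠ 0 :=
        ne_of_gt (lt_of_lt_of_le hpω (aux_le_prob hp1 (fun ω => (A ω, C ω)) ω))
      have h2 : prob p (fun ω => (B ω, C ω)) (B ω, C ω) ≠ 0 :=
        ne_of_gt (lt_of_lt_of_le hpω (aux_le_prob hp1 (fun ω => (B ω, C ω)) ω))
      have h3 : prob p C (C ω) ≠ 0 :=
        ne_of_gt (lt_of_lt_of_le hpω (aux_le_prob hp1 C ω))
      have h4 : prob p (fun ω => (A ω, B ω, C ω)) (A ω, B ω, C ω) ≠ 0 :=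
        ne_of_gt (lt_of_lt_of_le hpω (aux_le_prob hp1 (fun ω => (A ω, B ω, C ω)) ω))
      have hgv : g (A ω, B ω, C ω)
          = prob p (fun ω => (A ω, C ω)) (A ω, C ω) * prob p (fun ω => (B ω, C ω)) (B ω, C ω)
            / prob p C (C ω) := rfl
      have hq : prob p (fun ω => (A ω, B ω, C ω)) (A ω, B ω, C ω) / g (A ω, B ω, C ω)
          = prob p (fun ω => (A ω, B ω, C ω)) (A ω, B ω, C ω) * prob p C (C ω)
            / (prob p (fun ω => (A ω, C ω)) (A ω, C ω)
              * prob p (fun ω => (B ω, C ω)) (B ω, C ω)) := by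
        rw [hgv]
        field_simp
      rw [hq, Real.log_div (mul_ne_zero h4 h3) (mul_ne_zero h1 h2),
        Real.log_mul h4 h3, Real.log_mul h1 h2]
      ring
  have hCMIsum : ∑ t ∈ T, prob p (fun ω => (A ω, B ω, C ω)) t
      * Real.log (prob p (fun ω => (A ω, B ω, C ω)) t / g t) = 0 := by
    calc ∑ t ∈ T, prob p (fun ω => (A ω, B ω, C ω)) t
        * Real.log (prob p (fun ω => (A ω, B ω, C ω)) t / g t)
        = ∑ t ∈ T, ∑ ω ∈ Finset.univ.filter (fun ω => (A ω, B ω, C ω) = t),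
            p ω * Real.log (prob p (fun ω => (A ω, B ω, C ω)) (A ω, B ω, C ω)
              / g (A ω, B ω, C ω)) := Finset.sum_congr rfl hfiber
      _ = ∑ ω, p ω * Real.log (prob p (fun ω => (A ω, B ω, C ω)) (A ω, B ω, C ω)
              / g (A ω, B ω, C ω)) :=
          Finset.sum_fiberwise_of_maps_to (fun ω _ => hTmem ω) _
      _ = ∑ ω, (p ω * Real.log (prob p (fun ω => (A ω, B ω, C ω)) (A ω, B ω, C ω))
            + p ω * Real.log (prob p C (C ω))
            - p ω * Real.log (prob p (fun ω => (A ω, C ω)) (A ω, C ω))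
            - p ω * Real.log (prob p (fun ω => (B ω, C ω)) (B ω, C ω))) :=
          Finset.sum_congr rfl (fun ω _ => hsplit ω)
      _ = (∑ ω, p ω * Real.log (prob p (fun ω => (A ω, B ω, C ω)) (A ω, B ω, C ω)))
            + (∑ ω, p ω * Real.log (prob p C (C ω)))
            - (∑ ω, p ω * Real.log (prob p (fun ω => (A ω, C ω)) (A ω, C ω)))
            - (∑ ω, p ω * Real.log (prob p (fun ω => (B ω, C ω)) (B ω, C ω))) := by
          rw [Finset.sum_sub_distrib, Finset.sum_sub_distrib, Finset.sum_add_distrib]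
      _ = condMutualInfo p A B C := by
          simp only [condMutualInfo, aux_entropy_eq_sum]
          ring
      _ = 0 := h
  have hEq := gibbs_eq T (prob p (fun ω => (A ω, B ω, C ω))) g hf0 hg0 hfg
    (hsumf.trans hsumg.symm) hCMIsum
  -- conclude
  rcases eq_or_ne (prob p C c) 0 with hC0 | hC0
  · have hACz : prob p (fun ω => (A ω, C ω)) (a, c) = 0 := by
      refine le_antisymm ?_ (aux_prob_nonneg hp1 _ _)
      rw [← hC0]
      exact aux_prob_le_prob hp1 (fun ω hh => congrArg Prod.snd hh)
    rw [hC0, hACz]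
    ring
  · by_cases ha : a ∈ Finset.univ.image A
    · by_cases hb : b ∈ Finset.univ.image B
      · have hc : c ∈ Finset.univ.image C := by
          by_contra hcn
          exact hC0 (aux_prob_eq_zero (fun ω hh =>
            hcn (hh ▸ Finset.mem_image_of_mem C (Finset.mem_univ ω))))
        have ht : (a, b, c) ∈ T := by
          simp only [hT, Finset.mem_product]
          exact ⟨ha, hb, hc⟩
        have heq := hEq (a, b, c) ht
        rw [heq]
        have : g (a, b, c)
            = prob p (fun ω => (A ω, C ω)) (a, c) * prob p (fun ω => (B ω, C ω)) (b, c)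
              / prob p C c := rfl
        rw [this]
        exact div_mul_cancel₀ _ hC0
      · have h1 : prob p (fun ω => (A ω, B ω, C ω)) (a, b, c) = 0 := by
          apply aux_prob_eq_zero
          intro ω heq
          simp only [Prod.mk.injEq] at heq
          exact hb (heq.2.1 ▸ Finset.mem_image_of_mem B (Finset.mem_univ ω))
        have h2 : prob p (fun ω => (B ω, C ω)) (b, c) = 0 := by
          apply aux_prob_eq_zero
          intro ω heq
          simp only [Prod.mk.injEq] at heq
          exact hb (heq.1 ▸ Finset.mem_image_of_mem B (Finset.mem_univ ω))
        rw [h1, h2]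
        ring
    · have h1 : prob p (fun ω => (A ω, B ω, C ω)) (a, b, c) = 0 := by
        apply aux_prob_eq_zero
        intro ω heq
        simp only [Prod.mk.injEq] at heq
        exact ha (heq.1 ▸ Finset.mem_image_of_mem A (Finset.mem_univ ω))
      have h2 : prob p (fun ω => (A ω, C ω)) (a, c) = 0 := by
        apply aux_prob_eq_zero
        intro ω heq
        simp only [Prod.mk.injEq] at heq
        exact ha (heq.1 ▸ Finset.mem_image_of_mem A (Finset.mem_univ ω))
      rw [h1, h2]
      ring

/-- Under `Y ↔ X ↔ (Z₁,Z̃)` and `X ↔ Z₁ ↔ Y`, the conditional distribution of `Y`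
given `X` coincides with that given `Z₁` along the joint distribution: for all
`x, z₁` with `P(X=x, Z₁=z₁) > 0` and any `y`, `P(Y=y∣X=x) = P(Y=y∣Z₁=z₁)`. -/
theorem stmt_14 {Ω α β γ δ : Type*} [Fintype Ω]
    [DecidableEq α] [DecidableEq β] [DecidableEq γ] [DecidableEq δ]
    (p : Ω → ℝ) (hp : IsPMF p) (X : Ω → α) (Y : Ω → β) (Z₁ : Ω → γ) (Zt : Ω → δ)
    (hRep : condMutualInfo p Y (fun ω => (Z₁ ω, Zt ω)) X = 0)
    (hSuff : condMutualInfo p X Y Z₁ = 0) :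
    ∀ (x : α) (z₁ : γ) (y : β),
      0 < prob p (fun ω => (X ω, Z₁ ω)) (x, z₁) →
        prob p (fun ω => (Y ω, X ω)) (y, x) / prob p X x
          = prob p (fun ω => (Y ω, Z₁ ω)) (y, z₁) / prob p Z₁ z₁ := by
  intro x z₁ y hpos
  have hp1 := hp.1
  have hXpos : 0 < prob p X x :=
    lt_of_lt_of_le hpos (aux_prob_le_prob hp1 (fun ω hh => congrArg Prod.fst hh))
  have hZpos : 0 < prob p Z₁ z₁ :=
    lt_of_lt_of_le hpos (aux_prob_le_prob hp1 (fun ω hh => congrArg Prod.snd hh))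
  have h1 := ci_of_cmi_zero p hp X Y Z₁ hSuff x y z₁
  have h2 := fun zt => ci_of_cmi_zero p hp Y (fun ω => (Z₁ ω, Zt ω)) X hRep y (z₁, zt) x
  have hm1 : ∑ zt ∈ Finset.univ.image Zt,
      prob p (fun ω => (Y ω, (Z₁ ω, Zt ω), X ω)) (y, (z₁, zt), x)
        = prob p (fun ω => (Y ω, Z₁ ω, X ω)) (y, z₁, x) :=
    aux_prob_fiber_sum p Zt _ _ (fun zt => (y, (z₁, zt), x)) (y, z₁, x)
      (fun ω k => by simp only [Prod.mk.injEq]; tauto)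
  have hm2 : ∑ zt ∈ Finset.univ.image Zt,
      prob p (fun ω => ((Z₁ ω, Zt ω), X ω)) ((z₁, zt), x)
        = prob p (fun ω => (Z₁ ω, X ω)) (z₁, x) :=
    aux_prob_fiber_sum p Zt _ _ (fun zt => ((z₁, zt), x)) (z₁, x)
      (fun ω k => by simp only [Prod.mk.injEq]; tauto)
  have hq : prob p (fun ω => (Y ω, Z₁ ω, X ω)) (y, z₁, x) * prob p X x
      = prob p (fun ω => (Y ω, X ω)) (y, x) * prob p (fun ω => (Z₁ ω, X ω)) (z₁, x) := by
    rw [← hm1, ← hm2, Finset.sum_mul, Finset.mul_sum]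
    exact Finset.sum_congr rfl fun zt _ => h2 zt
  have hconv : prob p (fun ω => (Y ω, Z₁ ω, X ω)) (y, z₁, x)
      = prob p (fun ω => (X ω, Y ω, Z₁ ω)) (x, y, z₁) := by
    unfold prob
    exact Finset.sum_congr (Finset.filter_congr fun ω _ => by
      simp only [Prod.mk.injEq]; tauto) fun _ _ => rfl
  have hconv2 : prob p (fun ω => (Z₁ ω, X ω)) (z₁, x)
      = prob p (fun ω => (X ω, Z₁ ω)) (x, z₁) := by
    unfold prob
    exact Finset.sum_congr (Finset.filter_congr fun ω _ => by
      simp only [Prod.mk.injEq]; tauto) fun _ _ => rfl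
  rw [hconv, hconv2] at hq
  rw [div_eq_div_iff (ne_of_gt hXpos) (ne_of_gt hZpos)]
  apply mul_right_cancel₀ (ne_of_gt hpos)
  linear_combination prob p X x * h1 - prob p Z₁ z₁ * hq
end
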